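/- Let ρ ∉ X and X' = X ∪ {ρ}, and for each edge e ∈ E let C(e) ⊆ X denote the side of the split of e not containing ρ (so the side containing ρ is X' ∖ C(e)). Extend ε to X' by setting ε_ρ = 0. Then for every i ∈ X, the unrooted HED formula evaluated on X' reduces to the rooted HED formula: Σ_{e ∈ E} l(e) · (∏_{j ∈ C_i(e) ∖ {i}} ε_j) · (1 − ∏_{j ∈ X' ∖ C_i(e)} ε_j) = Σ_{e ∈ E with i ∈ C(e)} l(e) · ∏_{j ∈ C(e) ∖ {i}} ε_j, where C_i(e) = C(e) if i ∈ C(e) and C_i(e) = X' ∖ C(e) otherwise. (The rooted HED index is a special case of the unrooted HED index obtained by attaching a never-extinct leaf ρ at the root.) -/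
import Mathlib


open Finset

/-- The side of the split `{C e, X' \\ C e}` of edge `e` containing leaf `i`. -/
def sideOf {X E : Type*} [Fintype X] [DecidableEq X]
    (C : E → Finset X) (i : X) (e : E) : Finset X :=
  if i ∈ C e then C e else (univ : Finset X) \ C e

/-- Attaching a never-extinct leaf `ρ` at the root: the unrooted HED formula on
`X' = X ∪ {ρ}` (with `ε ρ = 0`) reduces to the rooted HED formula, for every
leaf `i ≠ ρ`. -/
theorem unrooted_HED_reduces_to_rooted {X' E : Type*} [Fintype X'] [Fintype E]
    [DecidableEq X'] (ρ : X') (l : E → ℝ) (C : E → Finset X')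
    (hC : ∀ e, ρ ∉ C e) (ε : X' → ℝ) (hε : ε ρ = 0)
    (i : X') (hi : i ≠ ρ) :
    ∑ e ∈ (univ : Finset E),
        l e * (∏ j ∈ sideOf C i e \ {i}, ε j) *
          (1 - ∏ j ∈ (univ : Finset X') \ sideOf C i e, ε j) =
      ∑ e ∈ univ.filter (fun e => i ∈ C e), l e * ∏ j ∈ C e \ {i}, ε j := by
  rw [← Finset.sum_filter_add_sum_filter_not (univ : Finset E) (fun e => i ∈ C e)]
  have h1 : ∀ e ∈ univ.filter (fun e => i ∈ C e),
      l e * (∏ j ∈ sideOf C i e \ {i}, ε j) *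
        (1 - ∏ j ∈ (univ : Finset X') \ sideOf C i e, ε j)
      = l e * ∏ j ∈ C e \ {i}, ε j := by
    intro e he
    simp only [mem_filter] at he
    have hs : sideOf C i e = C e := if_pos he.2
    rw [hs]
    have hρ : ρ ∈ (univ : Finset X') \ C e := by simp [hC e]
    rw [Finset.prod_eq_zero hρ hε]
    ring
  have h2 : ∀ e ∈ univ.filter (fun e => ¬ i ∈ C e),
      l e * (∏ j ∈ sideOf C i e \ {i}, ε j) *
        (1 - ∏ j ∈ (univ : Finset X') \ sideOf C i e, ε j) = 0 := by
    intro e he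
    simp only [mem_filter] at he
    have hs : sideOf C i e = (univ : Finset X') \ C e := if_neg he.2
    have hρ : ρ ∈ sideOf C i e \ {i} := by
      simp [hs, hC e, Ne.symm hi]
    rw [Finset.prod_eq_zero hρ hε]
    ring
  rw [Finset.sum_congr rfl h1, Finset.sum_congr rfl h2, Finset.sum_const_zero, add_zero]
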